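/- arXiv:1403.6726 — 4 statements merged into one kernel-verified Lean document; each statement's English description precedes it below -/
import Mathlib

section
/- Let 𝔗 be a 2×2 complex matrix with Pauli decomposition 𝔗 = Σγⱼσⱼ, and let k ∈ ℂ satisfy p(k) := 4(1+ik)² det 𝔗 − 4(1+ik)γ₀ + 1 ≠ 0. Then the S-matrix S(k) := (σ₀ − 2(1−ik)𝔗)(σ₀ − 2(1+ik)𝔗)⁻¹ equals σ₀ + 4ik(𝔗 − 2(1+ik)(det 𝔗)σ₀)/p(k). -/
open Matrix Complex

noncomputable def σ₀ : Matrix (Fin 2) (Fin 2) ℂ := 1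
noncomputable def σ₁ : Matrix (Fin 2) (Fin 2) ℂ := !![0, 1; 1, 0]
noncomputable def σ₂ : Matrix (Fin 2) (Fin 2) ℂ := !![0, -I; I, 0]
noncomputable def σ₃ : Matrix (Fin 2) (Fin 2) ℂ := !![1, 0; 0, -1]

/-!
With b = 2(1 + ik), splitting σ₀ − 2(1 − ik)𝔗 = (σ₀ − b𝔗) + 4ik 𝔗 reduces S(k) to
σ₀ + 4ik 𝔗(σ₀ − b𝔗)⁻¹. For a 2 × 2 matrix, Cayley–Hamilton 𝔗² = (tr 𝔗)𝔗 − det 𝔗 gives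
(𝔗 − b det 𝔗)(σ₀ − b𝔗) = det(σ₀ − b𝔗) 𝔗, and det(σ₀ − b𝔗) = 1 − b tr 𝔗 + b² det 𝔗 = p(k)
because tr 𝔗 = 2γ₀.
-/

namespace Matrix

section CommRing

variable {R : Type*} [CommRing R]

theorem sq_fin_two_eq_trace_smul_sub_det_smul (T : Matrix (Fin 2) (Fin 2) R) :
    T ^ 2 = T.trace • T - T.det • 1 := by
  nontriviality R
  have h := aeval_self_charpoly T
  rw [charpoly_fin_two] at h
  simp only [map_add, map_sub, map_mul, map_pow, Polynomial.aeval_X, Polynomial.aeval_C,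
    Algebra.algebraMap_eq_smul_one, smul_mul_assoc, one_mul] at h
  rw [← sub_eq_zero, ← h]
  abel

theorem det_one_sub_smul_fin_two (b : R) (T : Matrix (Fin 2) (Fin 2) R) :
    (1 - b • T).det = 1 - b * T.trace + b ^ 2 * T.det := by
  simp only [det_fin_two, trace_fin_two, sub_apply, smul_apply, one_apply_eq, smul_eq_mul,
    one_apply_ne Fin.zero_ne_one, one_apply_ne (Fin.zero_ne_one).symm]
  ring

theorem sub_det_smul_mul_one_sub_smul_fin_two (b : R) (T : Matrix (Fin 2) (Fin 2) R) :
    (T - (b * T.det) • 1) * (1 - b • T) = (1 - b • T).det • T := by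
  have hT : T * T = T.trace • T - T.det • 1 := by
    rw [← sq, sq_fin_two_eq_trace_smul_sub_det_smul]
  rw [det_one_sub_smul_fin_two]
  simp only [sub_mul, mul_sub, mul_one, one_mul, smul_mul_assoc, mul_smul_comm, hT]
  module

end CommRing

section Field

variable {K : Type*} [Field K]

theorem mul_inv_one_sub_smul_fin_two {b : K} {T : Matrix (Fin 2) (Fin 2) K}
    (h : (1 - b • T).det ≠ 0) :
    T * (1 - b • T)⁻¹ = (1 - b • T).det⁻¹ • (T - (b * T.det) • 1) := by
  have hT : (1 - b • T).det⁻¹ • ((T - (b * T.det) • 1) * (1 - b • T)) = T := by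
    rw [sub_det_smul_mul_one_sub_smul_fin_two, smul_smul, inv_mul_cancel₀ h, one_smul]
  calc T * (1 - b • T)⁻¹
      = ((1 - b • T).det⁻¹ • ((T - (b * T.det) • 1) * (1 - b • T))) * (1 - b • T)⁻¹ := by
        rw [hT]
    _ = (1 - b • T).det⁻¹ • (T - (b * T.det) • 1) := by
        rw [smul_mul_assoc, mul_nonsing_inv_cancel_right _ _ h.isUnit]

theorem one_sub_smul_mul_inv_one_sub_smul_fin_two {a b : K} {T : Matrix (Fin 2) (Fin 2) K}
    (h : (1 - b • T).det ≠ 0) :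
    (1 - a • T) * (1 - b • T)⁻¹ =
      1 + ((b - a) / (1 - b • T).det) • (T - (b * T.det) • 1) := by
  have hsplit : 1 - a • T = (1 - b • T) + (b - a) • T := by module
  rw [hsplit, add_mul, mul_nonsing_inv _ h.isUnit, smul_mul_assoc,
    mul_inv_one_sub_smul_fin_two h, smul_smul, div_eq_mul_inv]

end Field

end Matrix

theorem trace_pauli_combination (γ₀ γ₁ γ₂ γ₃ : ℂ) :
    (γ₀ • σ₀ + γ₁ • σ₁ + γ₂ • σ₂ + γ₃ • σ₃).trace = 2 * γ₀ := by
  simp only [trace_add, trace_smul, σ₀, trace_one, Fintype.card_fin, σ₁, σ₂, σ₃, trace_fin_two,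
    of_apply, cons_val', cons_val_zero, cons_val_fin_one, cons_val_one, Nat.cast_ofNat,
    smul_eq_mul, add_zero, add_neg_cancel, mul_zero]
  ring

theorem S_matrix_formula (γ₀ γ₁ γ₂ γ₃ k : ℂ)
    (𝔗 : Matrix (Fin 2) (Fin 2) ℂ)
    (h𝔗 : 𝔗 = γ₀ • σ₀ + γ₁ • σ₁ + γ₂ • σ₂ + γ₃ • σ₃)
    (hp : 4 * (1 + I * k) ^ 2 * 𝔗.det - 4 * (1 + I * k) * γ₀ + 1 ≠ 0) :
    (σ₀ - (2 * (1 - I * k)) • 𝔗) * (σ₀ - (2 * (1 + I * k)) • 𝔗)⁻¹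
      = σ₀ + ((4 * I * k) / (4 * (1 + I * k) ^ 2 * 𝔗.det - 4 * (1 + I * k) * γ₀ + 1)) •
          (𝔗 - (2 * (1 + I * k) * 𝔗.det) • σ₀) := by
  have hdet : (1 - (2 * (1 + I * k)) • 𝔗).det
      = 4 * (1 + I * k) ^ 2 * 𝔗.det - 4 * (1 + I * k) * γ₀ + 1 := by
    rw [det_one_sub_smul_fin_two, h𝔗, trace_pauli_combination, ← h𝔗]
    ring
  rw [← hdet] at hp ⊢
  rw [show 4 * I * k = 2 * (1 + I * k) - 2 * (1 - I * k) by ring]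
  exact one_sub_smul_mul_inv_one_sub_smul_fin_two hp
end

section
/- Let 𝔗 be a 2×2 complex matrix with det 𝔗 = 0 and Pauli coefficient γ₀ = (tr 𝔗)/2. Then for any k ∈ ℂ with 1 − 4(1+ik)γ₀ ≠ 0, the S-matrix S(k) = (σ₀ − 2(1−ik)𝔗)(σ₀ − 2(1+ik)𝔗)⁻¹ equals σ₀ + (4ik/(1 − 4(1+ik)γ₀))𝔗. -/
open Matrix Complex

lemma aux_sq (a b c d : ℂ) (h : a * d - b * c = 0) :
    !![a, b; c, d] * !![a, b; c, d] = (a + d) • !![a, b; c, d] := by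
  ext i j
  fin_cases i <;> fin_cases j <;> simp [Matrix.mul_fin_two, smul_eq_mul]
  · linear_combination -h
  · ring
  · ring
  · linear_combination -h

lemma sq_eq_trace_smul (A : Matrix (Fin 2) (Fin 2) ℂ) (h : A.det = 0) :
    A * A = A.trace • A := by
  rw [Matrix.det_fin_two] at h
  rw [Matrix.trace_fin_two, Matrix.eta_fin_two A]
  exact aux_sq _ _ _ _ h

theorem S_matrix_det_zero (k : ℂ)
    (𝔗 : Matrix (Fin 2) (Fin 2) ℂ)
    (hdet : 𝔗.det = 0)
    (hp : 1 - 4 * (1 + I * k) * (𝔗.trace / 2) ≠ 0) :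
    (σ₀ - (2 * (1 - I * k)) • 𝔗) * (σ₀ - (2 * (1 + I * k)) • 𝔗)⁻¹
      = σ₀ + ((4 * I * k) / (1 - 4 * (1 + I * k) * (𝔗.trace / 2))) • 𝔗 := by
  set t := 𝔗.trace with ht
  set a : ℂ := 2 * (1 + I * k) with ha
  set b : ℂ := 2 * (1 - I * k) with hb
  have hd : (1 : ℂ) - a * t ≠ 0 := by
    intro h; apply hp; rw [← h]; ring
  have hsq := sq_eq_trace_smul 𝔗 hdet
  have hinv : (σ₀ - a • 𝔗)⁻¹ = σ₀ + (a / (1 - a * t)) • 𝔗 := by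
    apply Matrix.inv_eq_right_inv
    have : (σ₀ - a • 𝔗) * (σ₀ + (a / (1 - a * t)) • 𝔗)
        = σ₀ + (a / (1 - a * t) - a - a * (a / (1 - a * t)) * t) • 𝔗 := by
      simp only [σ₀, mul_add, add_mul, sub_mul, mul_sub, one_mul, mul_one,
        Matrix.smul_mul, Matrix.mul_smul, smul_smul, hsq, ← ht]
      module
    rw [this]
    have h0 : a / (1 - a * t) - a - a * (a / (1 - a * t)) * t = 0 := by
      field_simp; ring
    rw [h0, zero_smul, add_zero, σ₀]
  rw [hinv]
  have key : (σ₀ - b • 𝔗) * (σ₀ + (a / (1 - a * t)) • 𝔗)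
      = σ₀ + (a / (1 - a * t) - b - b * (a / (1 - a * t)) * t) • 𝔗 := by
    simp only [σ₀, mul_add, add_mul, sub_mul, mul_sub, one_mul, mul_one,
      Matrix.smul_mul, Matrix.mul_smul, smul_smul, hsq, ← ht]
    module
  rw [key]
  congr 1
  have e0 : a / (1 - a * t) - b - b * (a / (1 - a * t)) * t = (a - b) / (1 - a * t) := by
    field_simp
    ring
  have e1 : (1:ℂ) - a * t = 1 - 4 * (1 + I * k) * (t / 2) := by rw [ha]; ring
  have e2 : a - b = 4 * I * k := by rw [ha, hb]; ring
  rw [e0, e1, e2]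
end

section
/- Let 𝔗 = (1/4)σ₀ + γ₁σ₁ + γ₂σ₂ + γ₃σ₃ with γ₁² + γ₂² + γ₃² = 1/16. Then for all k ∈ ℂ for which σ₀ − 2(1+ik)𝔗 is invertible, the S-matrix S(k) = (σ₀ − 2(1−ik)𝔗)(σ₀ − 2(1+ik)𝔗)⁻¹ equals −4(γ₁σ₁ + γ₂σ₂ + γ₃σ₃), independently of k. -/
open Matrix Complex

theorem S_matrix_const (γ₁ γ₂ γ₃ : ℂ)
    (hγ : γ₁ ^ 2 + γ₂ ^ 2 + γ₃ ^ 2 = 1 / 16)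
    (𝔗 : Matrix (Fin 2) (Fin 2) ℂ)
    (h𝔗 : 𝔗 = (1 / 4 : ℂ) • σ₀ + γ₁ • σ₁ + γ₂ • σ₂ + γ₃ • σ₃)
    (k : ℂ) (hk : IsUnit (σ₀ - (2 * (1 + I * k)) • 𝔗)) :
    (σ₀ - (2 * (1 - I * k)) • 𝔗) * (σ₀ - (2 * (1 + I * k)) • 𝔗)⁻¹
      = -((4 : ℂ) • (γ₁ • σ₁ + γ₂ • σ₂ + γ₃ • σ₃)) := by
  have hdet : IsUnit (σ₀ - (2 * (1 + I * k)) • 𝔗).det :=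
    (Matrix.isUnit_iff_isUnit_det _).mp hk
  have key : (σ₀ - (2 * (1 - I * k)) • 𝔗)
      = -((4 : ℂ) • (γ₁ • σ₁ + γ₂ • σ₂ + γ₃ • σ₃)) * (σ₀ - (2 * (1 + I * k)) • 𝔗) := by
    subst h𝔗
    ext i j
    fin_cases i <;> fin_cases j <;>
      simp [σ₀, σ₁, σ₂, σ₃, Matrix.mul_apply, Fin.sum_univ_succ, Matrix.one_apply]
    · linear_combination (-(8:ℂ) - 8*I*k) * hγ + (8*γ₂^2*(1 + I*k)) * Complex.I_sq
    · ring
    · ring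
    · linear_combination (-(8:ℂ) - 8*I*k) * hγ + (8*γ₂^2*(1 + I*k)) * Complex.I_sq
  rw [key, Matrix.mul_assoc, Matrix.mul_nonsing_inv _ hdet, Matrix.mul_one]
end

section
/- Let d ∈ ℂ with d ≠ 2, and 𝔗 = (1/(4−2d)) · [[1−d, 1],[1, 1−d]]. Then for all k ∈ ℂ with dk − 2i ≠ 0 (and σ₀ − 2(1+ik)𝔗 invertible), the S-matrix S(k) = (σ₀ − 2(1−ik)𝔗)(σ₀ − 2(1+ik)𝔗)⁻¹ equals (1/(dk−2i)) · [[−dk, 2i],[2i, −dk]]. -/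
/-!
Every matrix in the statement has the form `!![a, b; b, a]`, and such matrices are closed under
sums, scalar multiples and products. Clearing the inverse, `A * B⁻¹ = S` becomes `A = S * B`,
which therefore amounts to two scalar identities: one for the diagonal and one for the
off-diagonal entry. With `c = (4 - 2d)⁻¹` both are polynomial identities modulo `c (4 - 2d) = 1`
and `I ^ 2 = -1`.
-/

open Matrix Complex

section SymmetricFinTwo

variable {R : Type*} [CommRing R]

theorem one_sub_smul_symm_fin_two (s a b : R) :
    (1 : Matrix (Fin 2) (Fin 2) R) - s • !![a, b; b, a] =
      !![1 - s * a, -(s * b); -(s * b), 1 - s * a] := by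
  ext i j; fin_cases i <;> fin_cases j <;> simp

theorem smul_symm_fin_two (s a b : R) :
    s • !![a, b; b, a] = !![s * a, s * b; s * b, s * a] := by
  simp only [smul_of, smul_cons, smul_eq_mul, smul_empty]

theorem symm_fin_two_mul (a b c e : R) :
    !![a, b; b, a] * !![c, e; e, c] =
      !![a * c + b * e, a * e + b * c; a * e + b * c, a * c + b * e] := by
  rw [mul_fin_two]; ring_nf

end SymmetricFinTwo

theorem S_matrix_delta_prime (d : ℂ) (hd : d ≠ 2)
    (𝔗 : Matrix (Fin 2) (Fin 2) ℂ)
    (h𝔗 : 𝔗 = (4 - 2 * d)⁻¹ • !![1 - d, 1; 1, 1 - d])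
    (k : ℂ) (hk : d * k - 2 * I ≠ 0)
    (hinv : IsUnit (σ₀ - (2 * (1 + I * k)) • 𝔗)) :
    (σ₀ - (2 * (1 - I * k)) • 𝔗) * (σ₀ - (2 * (1 + I * k)) • 𝔗)⁻¹
      = (d * k - 2 * I)⁻¹ • !![-d * k, 2 * I; 2 * I, -d * k] := by
  have := (σ₀ - _).invertibleOfIsUnitDet ((isUnit_iff_isUnit_det _).mp hinv)
  rw [mul_inv_eq_iff_eq_mul_of_invertible, smul_mul_assoc]
  subst h𝔗
  set c := (4 - 2 * d)⁻¹
  have hc : c * (4 - 2 * d) = 1 :=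
    inv_mul_cancel₀ fun h ↦ hd (by linear_combination -h / 2)
  have diag : (d * k - 2 * I) * (1 - 2 * (1 - I * k) * c * (1 - d)) =
      -d * k * (1 - 2 * (1 + I * k) * c * (1 - d)) + 2 * I * -(2 * (1 + I * k) * c * 1) := by
    linear_combination (2 * I - 2 * d * k) * hc + (4 * c * d * k) * I_sq
  have off : (d * k - 2 * I) * -(2 * (1 - I * k) * c * 1) =
      -d * k * -(2 * (1 + I * k) * c * 1) + 2 * I * (1 - 2 * (1 + I * k) * c * (1 - d)) := by
    linear_combination (2 * I) * hc + (-4 * c * d * k) * I_sq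
  unfold σ₀
  rw [smul_smul, smul_smul, one_sub_smul_symm_fin_two, one_sub_smul_symm_fin_two,
    symm_fin_two_mul, smul_symm_fin_two, ← (eq_inv_mul_iff_mul_eq₀ hk).mpr diag,
    ← (eq_inv_mul_iff_mul_eq₀ hk).mpr off]
end
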